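/- Let α ∈ (0,1) and let m be a positive integer such that 2 + ((1+α)/2)^m < 3·((1+α)/2)^m·((3−α)/2)^m. Then Γ_{α,m} contains r_{α,m}/2 pairwise disjoint closed intervals, namely the intervals I^{(t)} = [ (r_{α,m}/2 − t)·((1+α)/2)^m + (t+1)·((1+α)/2)^m·((3−α)/2)^m + (r_{α,m}/2 − 1) , (r_{α,m}/2 − t)·((1+α)/2)^m + (t−1)·((1+α)/2)^m·((3−α)/2)^m + (r_{α,m}/2 + 1) ] for t = 1, …, r_{α,m}/2, each of which has length 2·(1 − ((1+α)/2)^m·((3−α)/2)^m). -/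

import Mathlib

open scoped BigOperators

/-- The central Cantor set `C_α ⊆ [0,1]`: the set of all sums
`Σ_{n} ε_n · ((1+α)/2) · ((1−α)/2)^n` with `ε_n ∈ {0,1}`. -/
noncomputable def centralCantor (α : ℝ) : Set ℝ :=
  {x | ∃ ε : ℕ → ℝ, (∀ n, ε n = 0 ∨ ε n = 1) ∧
    x = ∑' n : ℕ, ε n * ((1 + α) / 2) * ((1 - α) / 2) ^ n}

/-- `s_{α,m} = ⌈(2/(1+α))^{m−1}⌉`. -/
noncomputable def sCount (α : ℝ) (m : ℕ) : ℕ := ⌈(2 / (1 + α)) ^ (m - 1)⌉₊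

/-- `k_{α,m}`. -/
noncomputable def kCount (α : ℝ) (m : ℕ) : ℕ :=
  if 1 / 3 < α then
    ⌈((3 * α - 1) / 2) / (((1 + α) / 2) ^ (m - 1) * ((1 - α ^ 2) / 4))⌉₊
  else 0

/-- `r_{α,m} = 2 s_{α,m} + 2 k_{α,m}`. -/
noncomputable def rCount (α : ℝ) (m : ℕ) : ℕ := 2 * sCount α m + 2 * kCount α m

/-- `Γ_{α,m}`: sums of `r_{α,m}` many `m`-th powers of elements of `C_α`. -/
noncomputable def Gam (α : ℝ) (m : ℕ) : Set ℝ :=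
  {x | ∃ c : Fin (rCount α m) → ℝ, (∀ i, c i ∈ centralCantor α) ∧ x = ∑ i, c i ^ m}

/-- Left endpoint of the interval `I^{(t)}`. -/
noncomputable def leftEP (α : ℝ) (m t : ℕ) : ℝ :=
  ((rCount α m : ℝ) / 2 - t) * ((1 + α) / 2) ^ m
    + ((t : ℝ) + 1) * (((1 + α) / 2) ^ m * ((3 - α) / 2) ^ m)
    + ((rCount α m : ℝ) / 2 - 1)

/-- Right endpoint of the interval `I^{(t)}`. -/
noncomputable def rightEP (α : ℝ) (m t : ℕ) : ℝ :=
  ((rCount α m : ℝ) / 2 - t) * ((1 + α) / 2) ^ m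
    + ((t : ℝ) - 1) * (((1 + α) / 2) ^ m * ((3 - α) / 2) ^ m)
    + ((rCount α m : ℝ) / 2 + 1)



set_option maxHeartbeats 1000000

section AuxiliaryLemmas

lemma pow_sub_pow_le (m : ℕ) {a b : ℝ} (ha : 0 ≤ a) (hab : a ≤ b) (hb1 : b ≤ 1) :
    b ^ m - a ^ m ≤ m * (b - a) := by
  rw [← geom_sum₂_mul b a m]
  have : (∑ i ∈ Finset.range m, b ^ i * a ^ (m - 1 - i)) ≤ m := by
    calc (∑ i ∈ Finset.range m, b ^ i * a ^ (m - 1 - i))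
        ≤ ∑ i ∈ Finset.range m, 1 := by
          refine Finset.sum_le_sum fun i _ => ?_
          have h1 : b ^ i ≤ 1 := pow_le_one₀ (ha.trans hab) hb1
          have h2 : a ^ (m - 1 - i) ≤ 1 := pow_le_one₀ ha (hab.trans hb1)
          calc b ^ i * a ^ (m-1-i) ≤ 1 * 1 :=
            mul_le_mul h1 h2 (pow_nonneg ha _) zero_le_one
          _ = 1 := by ring
      _ = m := by simp
  have hba : 0 ≤ b - a := sub_nonneg.2 hab
  exact mul_le_mul_of_nonneg_right this hba

lemma le_pow_sub_pow (m : ℕ) {a b : ℝ} (ha : 0 ≤ a) (hab : a ≤ b) :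
    (m : ℝ) * a ^ (m - 1) * (b - a) ≤ b ^ m - a ^ m := by
  rw [← geom_sum₂_mul b a m]
  have : (m : ℝ) * a ^ (m - 1) ≤ ∑ i ∈ Finset.range m, b ^ i * a ^ (m - 1 - i) := by
    calc (m : ℝ) * a ^ (m-1) = ∑ _i ∈ Finset.range m, a ^ (m-1) := by simp [mul_comm]
      _ ≤ ∑ i ∈ Finset.range m, b ^ i * a ^ (m - 1 - i) := by
          refine Finset.sum_le_sum fun i hi => ?_
          have hi' : i < m := Finset.mem_range.1 hi
          have : a ^ (m-1) = a ^ i * a ^ (m - 1 - i) := by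
            rw [← pow_add]; congr 1; omega
          rw [this]
          exact mul_le_mul_of_nonneg_right (pow_le_pow_left₀ ha hab i) (pow_nonneg ha _)
  exact mul_le_mul_of_nonneg_right this (sub_nonneg.2 hab)

lemma disc_ivt (u v : ℕ → ℝ) (x : ℝ) : ∀ n : ℕ, u 0 ≤ x → x ≤ v n →
    (∀ j, j < n → u (j+1) ≤ v j) →
    ∃ j, j ≤ n ∧ u j ≤ x ∧ x ≤ v j := by
  intro n
  induction n with
  | zero => intro h0 hn _; exact ⟨0, le_refl _, h0, hn⟩
  | succ n ih =>
    intro h0 hn hchain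
    by_cases hle : u (n+1) ≤ x
    · exact ⟨n+1, le_refl _, hle, hn⟩
    · have hxv : x ≤ v n := le_trans (le_of_not_ge hle) (hchain n (Nat.lt_succ_self n))
      obtain ⟨j, hj, h⟩ := ih h0 hxv (fun j hj => hchain j (hj.trans (Nat.lt_succ_self n)))
      exact ⟨j, hj.trans (Nat.le_succ n), h⟩

lemma step_lemma (m N ν : ℕ) {b d : ℝ} (hd : 0 < d) (hbd : d + b = 1) (hdb : d ≤ b)
    (hcond : b - d ≤ ((N : ℝ) - 1) * b ^ (m - 1) * d)
    (l : Fin N → ℝ) (hlb : ∀ i, b ≤ l i) (hl1 : ∀ i, l i + d ^ ν ≤ 1)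
    (x : ℝ) (hx1 : ∑ i, (l i) ^ m ≤ x) (hx2 : x ≤ ∑ i, (l i + d ^ ν) ^ m) :
    ∃ l' : Fin N → ℝ, (∀ i, l' i = l i ∨ l' i = l i + b * d ^ ν) ∧
      (∑ i, (l' i) ^ m ≤ x) ∧ x ≤ ∑ i, (l' i + d ^ (ν+1)) ^ m := by
  have hb0 : 0 < b := lt_of_lt_of_le hd hdb
  have hd1 : d < 1 := by nlinarith
  have hdν : 0 < d ^ ν := pow_pos hd ν
  have hlnn : ∀ i, 0 ≤ l i := fun i => hb0.le.trans (hlb i)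
  -- family of intermediate configurations
  set w : ℕ → Fin N → ℝ := fun j i => if (i : ℕ) < j then l i + b * d ^ ν else l i with hw
  have hwnn : ∀ j i, 0 ≤ w j i := by
    intro j i; dsimp [w]; split
    · have := hlnn i; nlinarith [pow_pos hd ν]
    · exact hlnn i
  have hwub : ∀ j i, w j i + d ^ (ν+1) ≤ 1 := by
    intro j i
    have := hl1 i
    dsimp [w]; split <;> nlinarith [pow_pos hd ν, pow_pos hd (ν+1), pow_succ d ν]
  set u : ℕ → ℝ := fun j => ∑ i, (w j i) ^ m with hu
  set v : ℕ → ℝ := fun j => ∑ i, (w j i + d ^ (ν+1)) ^ m with hv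
  have hu0 : u 0 ≤ x := by
    have : u 0 = ∑ i, (l i) ^ m := by
      apply Finset.sum_congr rfl; intro i _; simp [w]
    rw [this]; exact hx1
  have hvN : x ≤ v N := by
    have : v N = ∑ i, (l i + d ^ ν) ^ m := by
      apply Finset.sum_congr rfl; intro i _
      have : (i : ℕ) < N := i.isLt
      simp only [w, if_pos this]
      have : l i + b * d ^ ν + d ^ (ν+1) = l i + d ^ ν := by rw [pow_succ]; nlinarith
      rw [this]
    rw [this]; exact hx2
  have hchain : ∀ j, j < N → u (j+1) ≤ v j := by
    intro j hjN
    set j0 : Fin N := (⟨j, hjN⟩ : Fin N) with hj0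
    have hsplit : ∀ i : Fin N, i ≠ j0 → w (j+1) i = w j i := by
      intro i hi
      have : (i : ℕ) ≠ j := by
        intro h; apply hi; apply Fin.ext; simpa using h
      dsimp [w]
      by_cases hlt : (i:ℕ) < j
      · rw [if_pos hlt, if_pos (hlt.trans (Nat.lt_succ_self j))]
      · rw [if_neg hlt, if_neg (by omega)]
    have key : v j - u (j+1) = ∑ i, ((w j i + d^(ν+1))^m - (w (j+1) i)^m) := by
      rw [Finset.sum_sub_distrib]
    have hterm : ∀ i ∈ Finset.univ.erase j0,
        (m : ℝ) * b ^ (m-1) * d ^ (ν+1) ≤ (w j i + d^(ν+1))^m - (w (j+1) i)^m := by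
      intro i hi
      have hne := Finset.ne_of_mem_erase hi
      rw [hsplit i hne]
      have h1 : (m:ℝ) * (w j i) ^ (m-1) * d^(ν+1) ≤ (w j i + d^(ν+1))^m - (w j i)^m := by
        have := le_pow_sub_pow m (hwnn j i) (by nlinarith [pow_pos hd (ν+1)] :
          w j i ≤ w j i + d^(ν+1))
        simpa using this
      have hbw : b ≤ w j i := by
        dsimp [w]; split
        · nlinarith [hlb i, pow_pos hd ν]
        · exact hlb i
      have h2 : b ^ (m-1) ≤ (w j i) ^ (m-1) := pow_le_pow_left₀ hb0.le hbw _
      have hm0 : (0:ℝ) ≤ (m:ℝ) := Nat.cast_nonneg m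
      have hdp : (0:ℝ) ≤ d ^ (ν+1) := by positivity
      calc (m:ℝ) * b ^ (m-1) * d ^ (ν+1)
          ≤ (m:ℝ) * (w j i) ^ (m-1) * d ^ (ν+1) :=
            mul_le_mul_of_nonneg_right (mul_le_mul_of_nonneg_left h2 hm0) hdp
        _ ≤ (w j i + d^(ν+1))^m - (w j i)^m := h1
    have htermj : (w j j0 + d^(ν+1))^m - (w (j+1) j0)^m ≥ -((m:ℝ) * (b - d) * d ^ ν) := by
      have hwj : w j j0 = l j0 := by dsimp [w]; rw [if_neg (by simp [hj0])]
      have hwj1 : w (j+1) j0 = l j0 + b * d ^ ν := by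
        dsimp [w]; rw [if_pos (by simp [hj0])]
      rw [hwj, hwj1]
      have hord : l j0 + d^(ν+1) ≤ l j0 + b * d^ν := by
        rw [pow_succ]; nlinarith
      have hub : l j0 + b * d ^ ν ≤ 1 := by nlinarith [hl1 j0]
      have := pow_sub_pow_le m
        (add_nonneg (hlnn j0) (pow_pos hd (ν+1)).le) hord hub
      have heq : (l j0 + b * d^ν) - (l j0 + d^(ν+1)) = (b - d) * d ^ ν := by
        rw [pow_succ]; ring
      rw [heq] at this
      nlinarith
    have hcard : (Finset.univ.erase j0).card = N - 1 := by
      rw [Finset.card_erase_of_mem (Finset.mem_univ _)]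
      simp
    have hsum : ∑ i ∈ Finset.univ.erase j0, ((w j i + d^(ν+1))^m - (w (j+1) i)^m)
        ≥ ((N:ℝ) - 1) * ((m : ℝ) * b ^ (m-1) * d ^ (ν+1)) := by
      have := Finset.card_nsmul_le_sum (Finset.univ.erase j0)
        (fun i => (w j i + d^(ν+1))^m - (w (j+1) i)^m)
        ((m : ℝ) * b ^ (m-1) * d ^ (ν+1)) hterm
      rw [hcard, nsmul_eq_mul] at this
      have hN1 : ((N - 1 : ℕ) : ℝ) = (N : ℝ) - 1 := by
        rw [Nat.cast_sub (by omega)]; simp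
      rw [hN1] at this
      exact this
    have hfinal : 0 ≤ v j - u (j+1) := by
      rw [key, ← Finset.sum_erase_add _ _ (Finset.mem_univ j0)]
      have hc : (m:ℝ) * (b - d) * d ^ ν ≤ ((N:ℝ) - 1) * ((m : ℝ) * b ^ (m-1) * d ^ (ν+1)) := by
        have hm0 : (0:ℝ) ≤ m := Nat.cast_nonneg m
        have := mul_le_mul_of_nonneg_left hcond (by positivity : (0:ℝ) ≤ (m:ℝ) * d ^ ν)
        calc (m:ℝ) * (b - d) * d ^ ν = (m:ℝ) * d ^ ν * (b - d) := by ring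
          _ ≤ (m:ℝ) * d ^ ν * (((N : ℝ) - 1) * b ^ (m - 1) * d) := this
          _ = ((N:ℝ) - 1) * ((m : ℝ) * b ^ (m-1) * d ^ (ν+1)) := by rw [pow_succ]; ring
      nlinarith [hsum, htermj]
    linarith
  obtain ⟨j, hjN, hju, hjv⟩ := disc_ivt u v x N hu0 hvN hchain
  refine ⟨w j, fun i => ?_, hju, hjv⟩
  dsimp [w]; split
  · right; rfl
  · left; rfl

lemma coverage (m N : ℕ) {b d : ℝ} (hd : 0 < d) (hbd : d + b = 1) (hdb : d ≤ b)
    (hcond : b - d ≤ ((N : ℝ) - 1) * b ^ (m - 1) * d)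
    (l : Fin N → ℝ) (hl : ∀ i, l i = b ∨ l i = b + b * d)
    (x : ℝ) (hx1 : ∑ i, (l i) ^ m ≤ x) (hx2 : x ≤ ∑ i, (l i + d ^ 2) ^ m) :
    ∃ c : Fin N → ℝ,
      (∀ i, ∃ ε : ℕ → ℝ, (∀ n, ε n = 0 ∨ ε n = 1) ∧ c i = ∑' n, ε n * b * d ^ n) ∧
      ∑ i, (c i) ^ m = x := by
  have hb0 : 0 < b := lt_of_lt_of_le hd hdb
  have hd1 : d < 1 := by nlinarith
  have hb1 : b < 1 := by nlinarith
  set Inv : ℕ → (Fin N → ℝ) → Prop := fun n w =>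
    (∀ i, b ≤ w i) ∧ (∀ i, w i + d ^ (2+n) ≤ 1) ∧
    (∑ i, (w i) ^ m ≤ x) ∧ (x ≤ ∑ i, (w i + d ^ (2+n)) ^ m) with hInvDef
  have stepEx : ∀ n w, Inv n w → ∃ w' : Fin N → ℝ,
      (∀ i, w' i = w i ∨ w' i = w i + b * d ^ (2+n)) ∧ Inv (n+1) w' := by
    intro n w hw
    obtain ⟨hwb, hw1, hwx1, hwx2⟩ := hw
    obtain ⟨w', hdisj, h1, h2⟩ := step_lemma m N (2+n) hd hbd hdb hcond w hwb hw1 x hwx1 hwx2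
    refine ⟨w', hdisj, ?_, ?_, h1, ?_⟩
    · intro i
      rcases hdisj i with h | h <;> rw [h]
      · exact hwb i
      · have : 0 ≤ b * d ^ (2+n) := by positivity
        linarith [hwb i]
    · intro i
      have hdpow : d ^ (2+(n+1)) = d * d ^ (2+n) := by
        rw [show 2+(n+1) = (2+n)+1 by omega, pow_succ]; ring
      rcases hdisj i with h | h <;> rw [h, hdpow]
      · have : d * d ^ (2+n) ≤ d ^ (2+n) := by
          nlinarith [pow_pos hd (2+n)]
        linarith [hw1 i]
      · have : b * d ^ (2+n) + d * d ^ (2+n) = d ^ (2+n) := by nlinarith [pow_pos hd (2+n)]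
        linarith [hw1 i]
    · have : (2+n)+1 = 2+(n+1) := by omega
      rw [this] at h2
      exact h2
  classical
  set nextw : ℕ → (Fin N → ℝ) → (Fin N → ℝ) := fun n w =>
    if h : Inv n w then Classical.choose (stepEx n w h) else w with hnextw
  set St : ℕ → Fin N → ℝ := fun n => Nat.rec l (fun k w => nextw k w) n with hStDef
  have hSt0 : St 0 = l := rfl
  have hStS : ∀ n, St (n+1) = nextw n (St n) := fun n => rfl
  have hInv0 : Inv 0 l := by
    refine ⟨?_, ?_, hx1, hx2⟩
    · intro i
      rcases hl i with h | h <;> rw [h] <;> nlinarith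
    · intro i
      have hd2 : d ^ (2+0) = d * d := by ring
      rcases hl i with h | h <;> rw [h, hd2] <;> nlinarith
  have hInvAll : ∀ n, Inv n (St n) := by
    intro n
    induction n with
    | zero => rw [hSt0]; exact hInv0
    | succ n ih =>
      rw [hStS n, hnextw]
      simp only [dif_pos ih]
      exact (Classical.choose_spec (stepEx n (St n) ih)).2
  have hdisj : ∀ n i, St (n+1) i = St n i ∨ St (n+1) i = St n i + b * d ^ (2+n) := by
    intro n i
    have := (Classical.choose_spec (stepEx n (St n) (hInvAll n))).1 i
    rw [hStS n, hnextw]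
    simp only [dif_pos (hInvAll n)]
    exact this
  -- increments
  set D : ℕ → Fin N → ℝ := fun n i => St (n+1) i - St n i with hD
  have hD0 : ∀ n i, 0 ≤ D n i := by
    intro n i; rcases hdisj n i with h | h <;> simp [hD, h] <;> positivity
  have hDle : ∀ n i, D n i ≤ b * d ^ (2+n) := by
    intro n i; rcases hdisj n i with h | h <;> simp [hD, h]; positivity
  have hgeom : Summable (fun n : ℕ => b * d ^ 2 * d ^ n) :=
    (summable_geometric_of_lt_one hd.le hd1).mul_left _
  have hDsum : ∀ i, Summable (fun n => D n i) := by
    intro i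
    apply Summable.of_nonneg_of_le (fun n => hD0 n i) (fun n => ?_) hgeom
    calc D n i ≤ b * d ^ (2+n) := hDle n i
      _ = b * d ^ 2 * d ^ n := by rw [pow_add]; ring
  set c : Fin N → ℝ := fun i => l i + ∑' n, D n i with hc
  have htel : ∀ n i, ∑ j ∈ Finset.range n, D j i = St n i - l i := by
    intro n i
    have := Finset.sum_range_sub (fun k => St k i) n
    simpa [hD, hSt0] using this
  have htail : ∀ n i, c i = St n i + ∑' j, D (j+n) i := by
    intro n i
    have h := Summable.sum_add_tsum_nat_add n (hDsum i)
    rw [htel n i] at h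
    simp only [hc]
    linarith [h]
  have htailb : ∀ n i, ∑' j, D (j+n) i ≤ d ^ (2+n) := by
    intro n i
    have hle : ∀ j, D (j+n) i ≤ b * d ^ (2+n) * d ^ j := by
      intro j
      calc D (j+n) i ≤ b * d ^ (2+(j+n)) := hDle (j+n) i
        _ = b * d ^ (2+n) * d ^ j := by rw [show 2+(j+n) = (2+n)+j by omega, pow_add]; ring
    have hsum2 : Summable (fun j : ℕ => b * d ^ (2+n) * d ^ j) :=
      (summable_geometric_of_lt_one hd.le hd1).mul_left _
    calc ∑' j, D (j+n) i ≤ ∑' j, b * d ^ (2+n) * d ^ j :=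
          Summable.tsum_le_tsum hle ((hDsum i).comp_injective (add_left_injective n)) hsum2
      _ = b * d ^ (2+n) * (1 - d)⁻¹ := by
          rw [tsum_mul_left, tsum_geometric_of_lt_one hd.le hd1]
      _ = d ^ (2+n) := by
          have : (1:ℝ) - d = b := by linarith
          rw [this]; field_simp
  have htail0 : ∀ n i, 0 ≤ ∑' j, D (j+n) i := by
    intro n i
    exact tsum_nonneg (fun j => hD0 (j+n) i)
  have hcb : ∀ n i, St n i ≤ c i ∧ c i ≤ St n i + d ^ (2+n) := by
    intro n i
    constructor
    · rw [htail n i]; linarith [htail0 n i]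
    · rw [htail n i]; linarith [htailb n i]
  -- membership
  have hmem : ∀ i, ∃ ε : ℕ → ℝ, (∀ n, ε n = 0 ∨ ε n = 1) ∧ c i = ∑' n, ε n * b * d ^ n := by
    intro i
    set ε : ℕ → ℝ := fun k =>
      if k = 0 then 1 else if k = 1 then (if l i = b then 0 else 1)
      else (if St (k-1) i = St (k-2) i then 0 else 1) with hε
    have hε01 : ∀ n, ε n = 0 ∨ ε n = 1 := by
      intro n; simp only [hε]
      split
      · right; rfl
      · split
        · split
          · left; rfl
          · right; rfl
        · split
          · left; rfl
          · right; rfl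
    refine ⟨ε, hε01, ?_⟩
    have hterm2 : ∀ j, ε (j+2) * b * d ^ (j+2) = D j i := by
      intro j
      have h0 : j + 2 ≠ 0 := by omega
      have h1 : j + 2 ≠ 1 := by omega
      have e1 : j + 2 - 1 = j + 1 := by omega
      have e2 : j + 2 - 2 = j := by omega
      simp only [hε, if_neg h0, if_neg h1, e1, e2]
      by_cases heq : St (j+1) i = St j i
      · simp [if_pos heq, hD, heq]
      · rw [if_neg heq]
        rcases hdisj j i with h | h
        · exact absurd h heq
        · simp only [hD, h]
          rw [show 2+j = j+2 by omega]
          ring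
    have hsumε : Summable (fun k => ε k * b * d ^ k) := by
      apply Summable.of_nonneg_of_le (fun k => ?_) (fun k => ?_)
        ((summable_geometric_of_lt_one hd.le hd1).mul_left b)
      · rcases hε01 k with h | h <;> rw [h] <;> positivity
      · rcases hε01 k with h | h <;> rw [h] <;> [skip; skip] <;> nlinarith [pow_pos hd k]
    have hsplit := Summable.sum_add_tsum_nat_add 2 hsumε
    have hfirst : ∑ k ∈ Finset.range 2, ε k * b * d ^ k = l i := by
      have e0 : ε 0 = 1 := by simp [hε]
      rcases hl i with h | h
      · have e1 : ε 1 = 0 := by simp [hε, h]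
        rw [Finset.sum_range_succ, Finset.sum_range_one, e0, e1, h]; ring
      · have hne : l i ≠ b := by rw [h]; intro hc2; nlinarith
        have e1 : ε 1 = 1 := by simp [hε, hne]
        rw [Finset.sum_range_succ, Finset.sum_range_one, e0, e1, h]; ring
    have hsecond : ∑' j, ε (j+2) * b * d ^ (j+2) = ∑' j, D j i := by
      exact tsum_congr hterm2
    rw [hc]
    rw [← hsplit, hfirst, hsecond]
  -- final equality
  have hfin : ∑ i, (c i) ^ m = x := by
    set T := ∑ i, (c i) ^ m with hT
    have hbound : ∀ n : ℕ, |x - T| ≤ (N * m * d ^ 2) * d ^ n := by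
      intro n
      have hup : x ≤ T + N * (m * d ^ (2+n)) := by
        have h1 : x ≤ ∑ i, (St n i + d ^ (2+n)) ^ m := (hInvAll n).2.2.2
        have h2 : ∑ i, (St n i + d ^ (2+n)) ^ m ≤ ∑ i, ((c i) ^ m + m * d ^ (2+n)) := by
          apply Finset.sum_le_sum
          intro i _
          have hci0 : 0 ≤ c i := le_trans (le_trans hb0.le ((hInvAll n).1 i)) (hcb n i).1
          have := pow_sub_pow_le m hci0 (hcb n i).2 ((hInvAll n).2.1 i)
          have h3 : St n i + d ^ (2+n) - c i ≤ d ^ (2+n) := by linarith [(hcb n i).1]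
          nlinarith [Nat.cast_nonneg (α := ℝ) m]
        have h4 : ∑ i, ((c i) ^ m + m * d ^ (2+n)) = T + N * (m * d ^ (2+n)) := by
          rw [Finset.sum_add_distrib, Finset.sum_const, Finset.card_univ, Fintype.card_fin]
          simp [hT, nsmul_eq_mul]
        linarith
      have hdown : T - N * (m * d ^ (2+n)) ≤ x := by
        have h1 : ∑ i, (St n i) ^ m ≤ x := (hInvAll n).2.2.1
        have h2 : ∑ i, ((c i) ^ m - m * d ^ (2+n)) ≤ ∑ i, (St n i) ^ m := by
          apply Finset.sum_le_sum
          intro i _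
          have hSt0' : 0 ≤ St n i := le_trans hb0.le ((hInvAll n).1 i)
          have hcub : c i ≤ 1 := le_trans (hcb n i).2 ((hInvAll n).2.1 i)
          have := pow_sub_pow_le m hSt0' (hcb n i).1 hcub
          have h3 : c i - St n i ≤ d ^ (2+n) := by linarith [(hcb n i).2]
          nlinarith [Nat.cast_nonneg (α := ℝ) m]
        have h4 : ∑ i, ((c i) ^ m - m * d ^ (2+n)) = T - N * (m * d ^ (2+n)) := by
          rw [Finset.sum_sub_distrib, Finset.sum_const, Finset.card_univ, Fintype.card_fin]
          simp [hT, nsmul_eq_mul]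
        linarith
      have heq : (N:ℝ) * (m * d ^ (2+n)) = (N * m * d ^ 2) * d ^ n := by
        rw [pow_add]; ring
      rw [abs_le]
      constructor <;> [linarith [hdown, heq.le]; linarith [hup]]
    have htend : Filter.Tendsto (fun n : ℕ => (N * m * d ^ 2 : ℝ) * d ^ n)
        Filter.atTop (nhds 0) := by
      have := (tendsto_pow_atTop_nhds_zero_of_lt_one hd.le hd1).const_mul
        ((N : ℝ) * m * d ^ 2)
      simpa using this
    have : |x - T| ≤ 0 := ge_of_tendsto' htend (fun n => hbound n) |>.trans (le_refl 0)
    have := abs_nonpos_iff.mp this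
    linarith [sub_eq_zero.mp this]
  exact ⟨c, hmem, hfin⟩

lemma sum_if_split (a c : ℕ) (A B : ℝ) :
    ∑ n ∈ Finset.range (a + c), (if n < a then A else B) = a * A + c * B := by
  induction c with
  | zero =>
    rw [Nat.add_zero]
    rw [Finset.sum_congr rfl (fun n hn => if_pos (Finset.mem_range.1 hn))]
    simp
  | succ c ih =>
    rw [show a + (c+1) = (a+c)+1 by omega, Finset.sum_range_succ, ih,
      if_neg (by omega)]
    push_cast; ring

lemma one_mem_centralCantor {α : ℝ} (hα : α ∈ Set.Ioo (0:ℝ) 1) :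
    (1:ℝ) ∈ centralCantor α := by
  obtain ⟨h0, h1⟩ := hα
  refine ⟨fun _ => 1, fun n => Or.inr rfl, ?_⟩
  have hd0 : (0:ℝ) ≤ (1-α)/2 := by linarith
  have hd1 : (1-α)/2 < 1 := by linarith
  rw [show (fun n : ℕ => (1:ℝ) * ((1 + α) / 2) * ((1 - α) / 2) ^ n)
      = (fun n : ℕ => ((1 + α) / 2) * ((1 - α) / 2) ^ n) by funext n; ring]
  rw [tsum_mul_left, tsum_geometric_of_lt_one hd0 hd1]
  have : (1:ℝ) - (1-α)/2 = (1+α)/2 := by ring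
  rw [this]
  field_simp


end AuxiliaryLemmas

/-- If `2 + ((1+α)/2)^m < 3 ((1+α)/2)^m ((3−α)/2)^m`, then `Γ_{α,m}` contains the
`r_{α,m}/2` pairwise disjoint intervals `I^{(t)}`, each of length
`2 (1 − ((1+α)/2)^m ((3−α)/2)^m)`. -/
theorem disjoint_intervals_in_Gamma (α : ℝ) (hα : α ∈ Set.Ioo (0 : ℝ) 1) (m : ℕ) (hm : 0 < m)
    (hineq : 2 + ((1 + α) / 2) ^ m < 3 * ((1 + α) / 2) ^ m * ((3 - α) / 2) ^ m) :
    (∀ t ∈ Finset.Icc 1 (rCount α m / 2),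
        Set.Icc (leftEP α m t) (rightEP α m t) ⊆ Gam α m ∧
        rightEP α m t - leftEP α m t
          = 2 * (1 - ((1 + α) / 2) ^ m * ((3 - α) / 2) ^ m)) ∧
    ∀ t ∈ Finset.Icc 1 (rCount α m / 2), ∀ t' ∈ Finset.Icc 1 (rCount α m / 2), t ≠ t' →
      Disjoint (Set.Icc (leftEP α m t) (rightEP α m t))
        (Set.Icc (leftEP α m t') (rightEP α m t')) := by
  obtain ⟨hα0, hα1⟩ := hα
  set b : ℝ := (1+α)/2 with hbdef
  set d : ℝ := (1-α)/2 with hddef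
  have hd : 0 < d := by rw [hddef]; linarith
  have hb0 : 0 < b := by rw [hbdef]; linarith
  have hbd : d + b = 1 := by rw [hbdef, hddef]; ring
  have hdb : d ≤ b := by rw [hbdef, hddef]; linarith
  have hd1 : d < 1 := by linarith
  set K : ℕ := sCount α m + kCount α m with hK
  have hKr : rCount α m = 2 * K := by rw [rCount, hK]; ring
  have hhalf : rCount α m / 2 = K := by omega
  have hcast : ((rCount α m : ℕ) : ℝ) / 2 = (K : ℝ) := by
    rw [hKr]; push_cast; ring
  -- key condition
  have hcond : b - d ≤ (((K+1 : ℕ) : ℝ) - 1) * b ^ (m - 1) * d := by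
    have hbma : b - d = α := by rw [hbdef, hddef]; ring
    have hbpow : (0:ℝ) < b ^ (m-1) := pow_pos hb0 _
    have hs : (1:ℝ) ≤ (sCount α m : ℝ) * b ^ (m-1) := by
      have h1 : ((2 / (1 + α)) : ℝ) ^ (m-1) ≤ (sCount α m : ℝ) := Nat.le_ceil _
      have h2 : ((2 / (1 + α)) : ℝ) = b⁻¹ := by rw [hbdef]; field_simp
      rw [h2, inv_pow] at h1
      calc (1:ℝ) = (b ^ (m-1))⁻¹ * b ^ (m-1) := by field_simp
        _ ≤ (sCount α m : ℝ) * b ^ (m-1) :=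
          mul_le_mul_of_nonneg_right h1 hbpow.le
    have hc1 : (((K+1 : ℕ) : ℝ) - 1) = ((sCount α m : ℝ) + (kCount α m : ℝ)) := by
      rw [hK]; push_cast; ring
    rw [hc1, hbma]
    by_cases h13 : 1/3 < α
    · have hkval : kCount α m =
          ⌈((3 * α - 1) / 2) / (((1 + α) / 2) ^ (m - 1) * ((1 - α ^ 2) / 4))⌉₊ := by
        rw [kCount, if_pos h13]
      have hden : ((1 + α) / 2) ^ (m - 1) * ((1 - α ^ 2) / 4) = b ^ (m-1) * (b * d) := by
        rw [hbdef, hddef]; ring_nf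
      have hXpos : (0:ℝ) < (3 * α - 1) / 2 := by linarith
      have hdenpos : (0:ℝ) < b ^ (m-1) * (b * d) := by positivity
      have hk : ((3 * α - 1) / 2) / (b ^ (m-1) * (b * d)) ≤ (kCount α m : ℝ) := by
        rw [hkval, ← hden]
        exact Nat.le_ceil _
      have hk2 : (3 * α - 1) / 2 / b ≤ (kCount α m : ℝ) * b ^ (m-1) * d := by
        have := mul_le_mul_of_nonneg_right hk (by positivity : (0:ℝ) ≤ b ^ (m-1) * d)
        calc (3 * α - 1) / 2 / b
            = ((3 * α - 1) / 2) / (b ^ (m-1) * (b * d)) * (b ^ (m-1) * d) := by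
              field_simp
          _ ≤ (kCount α m : ℝ) * (b ^ (m-1) * d) := this
          _ = (kCount α m : ℝ) * b ^ (m-1) * d := by ring
      have hs2 : d ≤ (sCount α m : ℝ) * b ^ (m-1) * d :=
        le_mul_of_one_le_left hd.le hs |>.trans_eq (by ring)
      have hkey : α ≤ d + (3 * α - 1) / 2 / b := by
        have hb1' : (0:ℝ) < 1 + α := by linarith
        have heq : d + (3 * α - 1) / 2 / b - α = (1-α)*(3*α-1)/(4*b) := by
          rw [hbdef, hddef]; field_simp; ring
        have hnn : (0:ℝ) ≤ (1-α)*(3*α-1)/(4*b) := by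
          apply div_nonneg
          · nlinarith
          · linarith
        linarith
      calc α ≤ d + (3 * α - 1) / 2 / b := hkey
        _ ≤ (sCount α m : ℝ) * b ^ (m-1) * d + (kCount α m : ℝ) * b ^ (m-1) * d := by
            linarith
        _ = ((sCount α m : ℝ) + kCount α m) * b ^ (m-1) * d := by ring
    · have hα13 : α ≤ 1/3 := le_of_not_gt h13
      have hda : α ≤ d := by rw [hddef]; linarith
      have hs2 : d ≤ (sCount α m : ℝ) * b ^ (m-1) * d :=
        le_mul_of_one_le_left hd.le hs |>.trans_eq (by ring)
      have hk0 : (0:ℝ) ≤ (kCount α m : ℝ) * b ^ (m-1) * d := by positivity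
      nlinarith
  have hQeq : ((1 + α) / 2) ^ m * ((3 - α) / 2) ^ m = (b + b*d) ^ m := by
    rw [← mul_pow]
    congr 1
    rw [hbdef, hddef]; ring
  have hQ1 : ((1 + α) / 2) ^ m * ((3 - α) / 2) ^ m ≤ 1 := by
    rw [hQeq]
    apply pow_le_one₀ (by nlinarith) (by nlinarith [sq_nonneg (1-α)])
  constructor
  · intro t ht
    rw [Finset.mem_Icc, hhalf] at ht
    obtain ⟨ht1, htK⟩ := ht
    have hK1 : 1 ≤ K := le_trans ht1 htK
    have ht1' : (1:ℝ) ≤ (t:ℝ) := by exact_mod_cast ht1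
    constructor
    · -- inclusion
      intro x hx
      obtain ⟨hxl, hxr⟩ := hx
      set a : ℕ := K - t with ha
      have haK : a + (t+1) = K + 1 := by omega
      set l : Fin (K+1) → ℝ := fun i => if (i:ℕ) < a then b else b + b * d with hldef
      have hlprop : ∀ i : Fin (K+1), l i = b ∨ l i = b + b * d := by
        intro i
        by_cases h : (i:ℕ) < a
        · left; simp [hldef, h]
        · right; simp [hldef, h]
      have hsplitsum : ∀ A B : ℝ, (∑ i : Fin (K+1), (if (i:ℕ) < a then A else B))
          = (a:ℝ) * A + ((t:ℝ)+1) * B := by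
        intro A B
        rw [Fin.sum_univ_eq_sum_range (fun n => if n < a then A else B) (K+1), ← haK,
          sum_if_split]
        push_cast; ring
      have hS1 : ∑ i : Fin (K+1), (l i) ^ m = (a:ℝ) * (b^m) + ((t:ℝ)+1) * ((b + b*d) ^ m) := by
        have hterm : ∀ i : Fin (K+1), (l i)^m = (if (i:ℕ) < a then b^m else (b+b*d)^m) := by
          intro i; simp only [hldef]; split <;> rfl
        rw [Finset.sum_congr rfl (fun i _ => hterm i), hsplitsum]
      have hone : b + b*d + d^2 = 1 := by rw [hbdef, hddef]; ring
      have hS2 : ∑ i : Fin (K+1), (l i + d^2) ^ m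
          = (a:ℝ) * ((b+d^2)^m) + ((t:ℝ)+1) * 1 := by
        have hterm : ∀ i : Fin (K+1), (l i + d^2)^m
            = (if (i:ℕ) < a then (b+d^2)^m else 1) := by
          intro i; simp only [hldef]; split
          · rfl
          · rw [hone, one_pow]
        rw [Finset.sum_congr rfl (fun i _ => hterm i), hsplitsum]
      have hacast : (a:ℝ) = (K:ℝ) - (t:ℝ) := by
        rw [ha, Nat.cast_sub htK]
      have hL : leftEP α m t = (a:ℝ)*(b^m) + ((t:ℝ)+1)*((b+b*d)^m) + ((K:ℝ) - 1) := by
        rw [leftEP, hcast, hQeq, hacast, hbdef]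
      have hR : rightEP α m t = (a:ℝ)*(b^m) + ((t:ℝ)-1)*((b+b*d)^m) + ((K:ℝ) + 1) := by
        rw [rightEP, hcast, hQeq, hacast, hbdef]
      have hQ1' : (b + b*d)^m ≤ 1 := by rw [← hQeq]; exact hQ1
      have hpowm : b^m ≤ (b+d^2)^m := by
        apply pow_le_pow_left₀ hb0.le
        nlinarith [sq_nonneg d]
      have ha0 : (0:ℝ) ≤ (a:ℝ) := Nat.cast_nonneg a
      have hx1' : ∑ i : Fin (K+1), (l i) ^ m ≤ x - ((K:ℝ)-1) := by
        rw [hS1]; rw [hL] at hxl; linarith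
      have hx2' : x - ((K:ℝ)-1) ≤ ∑ i : Fin (K+1), (l i + d^2) ^ m := by
        rw [hS2]; rw [hR] at hxr
        nlinarith [mul_nonneg ha0 (sub_nonneg.2 hpowm),
          mul_nonneg (by linarith : (0:ℝ) ≤ (t:ℝ)-1) (sub_nonneg.2 hQ1')]
      obtain ⟨c', hcmem, hcsum⟩ := coverage m (K+1) hd hbd hdb hcond l hlprop
        (x - ((K:ℝ)-1)) hx1' hx2'
      classical
      set cfun : ℕ → ℝ := fun n => if h : n < K+1 then c' ⟨n, h⟩ else 1 with hcfun
      refine ⟨fun i => cfun (i:ℕ), ?_, ?_⟩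
      · intro i
        by_cases h : (i:ℕ) < K+1
        · obtain ⟨ε, hε, hεeq⟩ := hcmem ⟨(i:ℕ), h⟩
          refine ⟨ε, hε, ?_⟩
          simp only [hcfun, dif_pos h]
          rw [hεeq, hbdef, hddef]
        · simp only [hcfun, dif_neg h]
          exact one_mem_centralCantor ⟨hα0, hα1⟩
      · have h2K : K + 1 ≤ rCount α m := by omega
        have hsA : (∑ i : Fin (rCount α m), (cfun (i:ℕ))^m)
            = ∑ n ∈ Finset.range (rCount α m), (cfun n)^m :=
          Fin.sum_univ_eq_sum_range (fun n => (cfun n)^m) _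
        have hsplit2 : (∑ n ∈ Finset.range (rCount α m), (cfun n)^m)
            = (∑ n ∈ Finset.range (K+1), (cfun n)^m)
              + ∑ n ∈ Finset.Ico (K+1) (rCount α m), (cfun n)^m := by
          rw [Finset.range_eq_Ico,
            ← Finset.sum_Ico_consecutive _ (Nat.zero_le _) h2K, ← Finset.range_eq_Ico]
        have hfirstsum : (∑ n ∈ Finset.range (K+1), (cfun n)^m) = x - ((K:ℝ)-1) := by
          rw [← hcsum, ← Fin.sum_univ_eq_sum_range (fun n => (cfun n)^m) (K+1)]
          apply Finset.sum_congr rfl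
          intro i _
          congr 1
          simp only [hcfun, dif_pos i.isLt]
        have hsecondsum : (∑ n ∈ Finset.Ico (K+1) (rCount α m), (cfun n)^m)
            = (K:ℝ) - 1 := by
          have hconst : ∀ n ∈ Finset.Ico (K+1) (rCount α m), (cfun n)^m = 1 := by
            intro n hn
            have h1 := (Finset.mem_Ico.1 hn).1
            have hnot : ¬ (n < K+1) := by omega
            simp only [hcfun, dif_neg hnot, one_pow]
          rw [Finset.sum_congr rfl hconst, Finset.sum_const, nsmul_eq_mul, mul_one,
            Nat.card_Ico, hKr, show 2*K - (K+1) = K-1 by omega, Nat.cast_sub hK1]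
          push_cast; ring
        show x = ∑ i : Fin (rCount α m), (cfun (i:ℕ))^m
        rw [hsA, hsplit2, hfirstsum, hsecondsum]
        ring
    · rw [rightEP, leftEP]; ring
  · -- disjointness
    have key : ∀ t t' : ℕ, 1 ≤ t → t < t' → rightEP α m t < leftEP α m t' := by
      intro t t' h1 hlt
      have hj : (1:ℝ) ≤ (t':ℝ) - (t:ℝ) := by
        have h2 : (t:ℝ) + 1 ≤ (t':ℝ) := by exact_mod_cast hlt
        linarith
      have hPQ := hineq
      rw [mul_assoc] at hPQ
      rw [rightEP, leftEP, hcast]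
      nlinarith [mul_nonneg (sub_nonneg.2 hQ1) (by linarith : (0:ℝ) ≤ (t':ℝ) - (t:ℝ) - 1),
        mul_pos (by linarith : (0:ℝ) < (t':ℝ) - (t:ℝ))
          (by linarith : (0:ℝ) < 3*(((1+α)/2)^m * ((3-α)/2)^m) - 2 - ((1+α)/2)^m)]
    intro t ht t' ht' hne
    rw [Finset.mem_Icc, hhalf] at ht ht'
    rcases Nat.lt_or_ge t t' with hlt | hge
    · have hkey := key t t' ht.1 hlt
      rw [Set.disjoint_left]
      intro z hz hz'
      have := hz.2
      have := hz'.1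
      linarith
    · have hlt' : t' < t := by omega
      have hkey := key t' t ht'.1 hlt'
      rw [Set.disjoint_left]
      intro z hz hz'
      have := hz.1
      have := hz'.2
      linarith
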